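/- Let m₋*, m₊* ∈ ℝ^d, let Σ₀ be a positive semidefinite covariance matrix, and let α ∈ (0, 1]. Define D* = ‖m₋* − m₊*‖₂² and the half-space E₋ = { m ∈ ℝ^d : ⟨m − m₋*, m₊* − m₋*⟩ ≤ ((1−α)/2) · D* }. Then for every m ∈ E₋: E_{m' ~ N(m₋*, Σ₀)}[ ‖m − m'‖₂² ] + α · D* ≤ E_{m' ~ N(m₊*, Σ₀)}[ ‖m − m'‖₂² ]. In particular, on the problem of classifying Gaussian distributions N(m_i, Σ) whose means m_i are drawn from N(m₋*, Σ₀) for class −1 and from N(m₊*, Σ₀) for class +1, the margin condition of an (ε, γ)-good dissimilarity with γ = α D* and unit weighting holds for the squared 2-Wasserstein distance whenever the mean of the test distribution lies in the half-space of its class. -/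

import Mathlib

open MeasureTheory ProbabilityTheory Matrix

/-- The standard Gaussian measure `N(0, I)` on `ℝ^d` (represented as `Fin d → ℝ`). -/
noncomputable def stdGaussian (d : ℕ) : MeasureTheory.Measure (Fin d → ℝ) :=
  MeasureTheory.Measure.pi fun _ => ProbabilityTheory.gaussianReal 0 1

open Classical in
/-- The Gaussian measure `N(m, S)` on `ℝ^d` with mean vector `m` and positive semidefinite
covariance matrix `S`, obtained as the law of `m + S^{1/2} x` for `x ~ N(0, I)`.
(Junk value `0` if `S` is not positive semidefinite.) -/
noncomputable def gaussian {d : ℕ} (m : Fin d → ℝ) (S : Matrix (Fin d) (Fin d) ℝ) :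
    MeasureTheory.Measure (Fin d → ℝ) :=
  if h : S.PosSemidef then (stdGaussian d).map (fun x => m +
    ((h.1.eigenvectorUnitary : Matrix (Fin d) (Fin d) ℝ) * diagonal (Real.sqrt ∘ h.1.eigenvalues) *
      (star (h.1.eigenvectorUnitary : Matrix (Fin d) (Fin d) ℝ))).mulVec x) else 0

/-! Under `N(μ, S)` the vector `m - m'` has mean `m - μ`, so `E‖m - m'‖²` splits as
`‖m - μ‖²` plus the trace of `S`, which does not depend on the mean. The two expectations
therefore differ by `‖m - m₊*‖² - ‖m - m₋*‖² = D* - 2⟨m - m₋*, m₊* - m₋*⟩ ≥ α D*`. -/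

section CentredSecondMoment

variable {Ω : Type*} [MeasurableSpace Ω] {P : Measure Ω} [IsProbabilityMeasure P]

lemma integral_const_sub_sq_of_integral_eq_zero {Y : Ω → ℝ} (hY : MemLp Y 2 P)
    (hY₀ : ∫ ω, Y ω ∂P = 0) (c : ℝ) :
    ∫ ω, (c - Y ω) ^ 2 ∂P = c ^ 2 + ∫ ω, Y ω ^ 2 ∂P := by
  have hY₁ : Integrable (fun ω => 2 * c * Y ω) P := (hY.integrable one_le_two).const_mul _
  have hlin : Integrable (fun ω => c ^ 2 - 2 * c * Y ω) P := (integrable_const _).sub hY₁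
  have hexpand : (fun ω => (c - Y ω) ^ 2) = fun ω => (c ^ 2 - 2 * c * Y ω) + Y ω ^ 2 := by
    funext ω; ring
  rw [hexpand, integral_add hlin hY.integrable_sq,
    integral_sub (integrable_const _) hY₁, integral_const_mul, hY₀]
  simp

lemma integral_sum_const_sub_sq_of_integral_eq_zero {ι : Type*} [Fintype ι] {X : Ω → ι → ℝ}
    (hX : ∀ i, MemLp (fun ω => X ω i) 2 P) (hX₀ : ∀ i, ∫ ω, X ω i ∂P = 0) (c : ι → ℝ) :
    ∫ ω, ∑ i, (c i - X ω i) ^ 2 ∂P = ∑ i, c i ^ 2 + ∫ ω, ∑ i, X ω i ^ 2 ∂P := by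
  have hsq (i : ι) : Integrable (fun ω => (c i - X ω i) ^ 2) P :=
    ((memLp_const (c i)).sub (hX i)).integrable_sq
  rw [integral_finsetSum _ fun i _ => hsq i,
    integral_finsetSum _ fun i _ => (hX i).integrable_sq, ← Finset.sum_add_distrib]
  exact Finset.sum_congr rfl fun i _ =>
    integral_const_sub_sq_of_integral_eq_zero (hX i) (hX₀ i) (c i)

end CentredSecondMoment

section StdGaussian

variable {d : ℕ}

instance : IsProbabilityMeasure (stdGaussian d) := by
  unfold _root_.stdGaussian; infer_instance

lemma memLp_stdGaussian_eval (j : Fin d) :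
    MemLp (fun x : Fin d → ℝ => x j) 2 (stdGaussian d) :=
  (memLp_id_gaussianReal 2).comp_measurePreserving (measurePreserving_eval _ j)

lemma integral_stdGaussian_eval (j : Fin d) : ∫ x, x j ∂stdGaussian d = 0 := by
  rw [_root_.stdGaussian, integral_eval, integral_id_gaussianReal]

variable {ι : Type*} (A : Matrix ι (Fin d) ℝ)

lemma memLp_stdGaussian_mulVec (i : ι) : MemLp (fun x => (A *ᵥ x) i) 2 (stdGaussian d) := by
  simp only [mulVec, dotProduct]
  exact memLp_finsetSum _ fun j _ => (memLp_stdGaussian_eval j).const_mul _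

lemma integral_stdGaussian_mulVec (i : ι) : ∫ x, (A *ᵥ x) i ∂stdGaussian d = 0 := by
  simp only [mulVec, dotProduct]
  rw [integral_finsetSum _ fun j _ =>
    ((memLp_stdGaussian_eval j).integrable one_le_two).const_mul _]
  simp [integral_const_mul, integral_stdGaussian_eval]

end StdGaussian

lemma integral_sum_sub_sq_gaussian {d : ℕ} {S : Matrix (Fin d) (Fin d) ℝ} (hS : S.PosSemidef)
    (μ m : Fin d → ℝ) :
    ∫ y, ∑ i, (m i - y i) ^ 2 ∂gaussian μ S
      = ∑ i, (m i - μ i) ^ 2 + ∫ y, ∑ i, y i ^ 2 ∂gaussian 0 S := by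
  set A : Matrix (Fin d) (Fin d) ℝ := (hS.1.eigenvectorUnitary : Matrix (Fin d) (Fin d) ℝ) *
    diagonal (Real.sqrt ∘ hS.1.eigenvalues) * star (hS.1.eigenvectorUnitary : Matrix _ _ ℝ)
  have hbias : ∀ μ m : Fin d → ℝ, ∫ y, ∑ i, (m i - y i) ^ 2 ∂gaussian μ S
      = ∑ i, (m i - μ i) ^ 2 + ∫ x, ∑ i, (A *ᵥ x) i ^ 2 ∂stdGaussian d := by
    intro μ m
    rw [gaussian, dif_pos hS, integral_map (by fun_prop)
      (by fun_prop : Measurable fun y : Fin d → ℝ => ∑ i, (m i - y i) ^ 2).aestronglyMeasurable]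
    simp only [Pi.add_apply, ← sub_sub]
    exact integral_sum_const_sub_sq_of_integral_eq_zero (memLp_stdGaussian_mulVec A)
      (integral_stdGaussian_mulVec A) _
  have hcentred :
      ∫ y, ∑ i, y i ^ 2 ∂gaussian 0 S = ∫ x, ∑ i, (A *ᵥ x) i ^ 2 ∂stdGaussian d := by
    simpa using hbias 0 0
  rw [hbias μ m, hcentred]

theorem stmt9_general (d : ℕ) (mneg mpos : Fin d → ℝ) (S₀ : Matrix (Fin d) (Fin d) ℝ)
    (h₀ : S₀.PosSemidef) (α : ℝ)
    (Dstar : ℝ) (hDstar : Dstar = ∑ i, (mneg i - mpos i) ^ 2)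
    (m : Fin d → ℝ)
    (hm : (∑ i, (m i - mneg i) * (mpos i - mneg i)) ≤ ((1 - α) / 2) * Dstar) :
    (∫ m', ∑ i, (m i - m' i) ^ 2 ∂(gaussian mneg S₀)) + α * Dstar
      ≤ ∫ m', ∑ i, (m i - m' i) ^ 2 ∂(gaussian mpos S₀) := by
  rw [integral_sum_sub_sq_gaussian h₀, integral_sum_sub_sq_gaussian h₀]
  have hpolar : ∑ i, (m i - mpos i) ^ 2 = ∑ i, (m i - mneg i) ^ 2 + Dstar
      - 2 * ∑ i, (m i - mneg i) * (mpos i - mneg i) := by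
    rw [hDstar, Finset.mul_sum, ← Finset.sum_add_distrib, ← Finset.sum_sub_distrib]
    exact Finset.sum_congr rfl fun i _ => by ring
  linarith

/-- let `m₋*, m₊* ∈ ℝ^d`, `Σ₀` positive semidefinite, `α ∈ (0,1]`,
`D* = ‖m₋* − m₊*‖₂²` and `E₋ = {m : ⟨m − m₋*, m₊* − m₋*⟩ ≤ ((1−α)/2) D*}`. Then for every
`m ∈ E₋`, `E_{m' ~ N(m₋*,Σ₀)}[‖m − m'‖₂²] + α D* ≤ E_{m' ~ N(m₊*,Σ₀)}[‖m − m'‖₂²]`: the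
margin condition of an `(ε,γ)`-good dissimilarity with `γ = α D*` and unit weighting
holds (for the squared 2-Wasserstein distance `W₂²(N(m₁,Σ),N(m₂,Σ)) = ‖m₁ − m₂‖₂²`)
whenever the mean of the test distribution lies in the half-space of its class. -/
theorem stmt9 (d : ℕ) (mneg mpos : Fin d → ℝ) (S₀ : Matrix (Fin d) (Fin d) ℝ)
    (h₀ : S₀.PosSemidef) (α : ℝ) (hα : α ∈ Set.Ioc (0 : ℝ) 1)
    (Dstar : ℝ) (hDstar : Dstar = ∑ i, (mneg i - mpos i) ^ 2)
    (m : Fin d → ℝ)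
    (hm : (∑ i, (m i - mneg i) * (mpos i - mneg i)) ≤ ((1 - α) / 2) * Dstar) :
    (∫ m', ∑ i, (m i - m' i) ^ 2 ∂(gaussian mneg S₀)) + α * Dstar
      ≤ ∫ m', ∑ i, (m i - m' i) ^ 2 ∂(gaussian mpos S₀) :=
  stmt9_general d mneg mpos S₀ h₀ α Dstar hDstar m hm
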